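/- Let X be a compact Hausdorff topological space, and call U ⊆ X a cozero set if U = {x | 0 < f(x)} for some f ∈ C(X, ℝ). Call a collection S of cozero sets an ideal if ∅ ∈ S, S is downward closed among cozero sets (U cozero, U ⊆ V ∈ S implies U ∈ S), and S is closed under finite unions. Then the map S ↦ ⋃S is an order isomorphism (with respect to inclusion) from the set of ideals S of cozero sets satisfying the condition: for every f ∈ C(X, ℝ), if {x | q < f(x)} ∈ S for every rational q > 0, then {x | 0 < f(x)} ∈ S, onto the topology of X. -/
import Mathlib


/-- A cozero set of a topological space `X`. -/
def IsCozero {X : Type*} [TopologicalSpace X] (U : Set X) : Prop :=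
  ∃ f : C(X, ℝ), U = {x | 0 < f x}

/-- An ideal of cozero sets satisfying the regularity scheme
`(∀ q > 0, {q < f} ∈ S) → {0 < f} ∈ S`. -/
def IsRatRegularCozeroIdeal {X : Type*} [TopologicalSpace X] (S : Set (Set X)) : Prop :=
  (∀ U ∈ S, IsCozero U) ∧
  (∅ : Set X) ∈ S ∧
  (∀ U V : Set X, IsCozero U → U ⊆ V → V ∈ S → U ∈ S) ∧
  (∀ U ∈ S, ∀ V ∈ S, U ∪ V ∈ S) ∧
  (∀ f : C(X, ℝ), (∀ q : ℚ, 0 < q → {x | (q : ℝ) < f x} ∈ S) → {x | 0 < f x} ∈ S)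

lemma IsCozero.isOpen {X : Type*} [TopologicalSpace X] {U : Set X} (h : IsCozero U) :
    IsOpen U := by
  obtain ⟨f, rfl⟩ := h
  exact isOpen_lt continuous_const f.continuous

lemma finset_union_mem {X : Type*} [TopologicalSpace X] {S : Set (Set X)}
    (hS : IsRatRegularCozeroIdeal S) (t : Finset (Set X)) (ht : ∀ V ∈ t, V ∈ S) :
    (⋃ V ∈ t, V) ∈ S := by
  classical
  induction t using Finset.induction_on with
  | empty => simpa using hS.2.1
  | @insert a s hx ih =>
    rw [Finset.set_biUnion_insert]
    exact hS.2.2.2.1 a (ht a (Finset.mem_insert_self a s)) _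
      (ih fun V hV => ht V (Finset.mem_insert_of_mem hV))

/-- Key lemma: any cozero subset of `⋃₀ S` belongs to `S`. -/
lemma mem_of_cozero_subset {X : Type*} [TopologicalSpace X] [CompactSpace X]
    {S : Set (Set X)} (hS : IsRatRegularCozeroIdeal S) {V : Set X}
    (hV : IsCozero V) (hsub : V ⊆ ⋃₀ S) : V ∈ S := by
  classical
  obtain ⟨f, rfl⟩ := hV
  apply hS.2.2.2.2
  intro q hq
  -- the closed set {x | q ≤ f x} is compact and contained in ⋃₀ S
  have hK : IsCompact {x : X | (q : ℝ) ≤ f x} :=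
    (isClosed_le continuous_const f.continuous).isCompact
  have hKsub : {x : X | (q : ℝ) ≤ f x} ⊆ ⋃₀ S := fun x hx =>
    hsub (show (0:ℝ) < f x from (by exact_mod_cast hq : (0:ℝ) < q).trans_le hx)
  -- finite subcover from the open sets in S
  have hcover : {x : X | (q : ℝ) ≤ f x} ⊆ ⋃ W : S, (W : Set X) := by
    intro x hx
    obtain ⟨W, hW, hxW⟩ := hKsub hx
    exact Set.mem_iUnion.2 ⟨⟨W, hW⟩, hxW⟩
  obtain ⟨t, ht⟩ := hK.elim_finite_subcover (fun W : S => (W : Set X))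
    (fun W => (hS.1 W W.2).isOpen) hcover
  set Wt : Set X := ⋃ W ∈ t.image (fun W : S => (W : Set X)), W with hWt
  have hWtS : Wt ∈ S := finset_union_mem hS _ (by
    intro V hVm
    obtain ⟨W, _, rfl⟩ := Finset.mem_image.1 hVm
    exact W.2)
  have hsub' : {x : X | (q : ℝ) < f x} ⊆ Wt := by
    intro x hx
    have := ht (show (q:ℝ) ≤ f x from le_of_lt hx)
    simp only [Set.mem_iUnion] at this
    obtain ⟨W, hWt', hxW⟩ := this
    exact Set.mem_biUnion (Finset.mem_image_of_mem _ hWt') hxW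
  have hcoz : IsCozero {x : X | (q : ℝ) < f x} := by
    refine ⟨f - ContinuousMap.const X (q : ℝ), ?_⟩
    ext x
    simp [sub_pos]
  exact hS.2.2.1 _ _ hcoz hsub' hWtS

/-- The canonical ideal of all cozero subsets of `U`. -/
lemma canonical_ideal {X : Type*} [TopologicalSpace X] (U : Set X) :
    IsRatRegularCozeroIdeal {V : Set X | IsCozero V ∧ V ⊆ U} := by
  refine ⟨fun V hV => hV.1, ⟨⟨0, by simp⟩, Set.empty_subset U⟩,
    fun V W hV hVW hW => ⟨hV, hVW.trans hW.2⟩, ?_, ?_⟩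
  · rintro V ⟨⟨f, rfl⟩, hVU⟩ W ⟨⟨g, rfl⟩, hWU⟩
    refine ⟨⟨f ⊔ g, ?_⟩, Set.union_subset hVU hWU⟩
    ext x
    simp [lt_sup_iff]
  · intro f hf
    refine ⟨⟨f, rfl⟩, ?_⟩
    intro x hx
    obtain ⟨q, hq0, hqf⟩ := exists_rat_btwn (show (0:ℝ) < f x from hx)
    have hq0' : (0 : ℚ) < q := by exact_mod_cast hq0
    exact (hf q hq0').2 hqf

/-- For a compact Hausdorff space `X`, the map `S ↦ ⋃S` is an order isomorphism from the
ideals of cozero sets satisfying the rational regularity scheme onto the topology of `X`. -/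
theorem ratRegularCozeroIdeals_orderIso_topology {X : Type*} [TopologicalSpace X]
    [CompactSpace X] [T2Space X] :
    (∀ S : Set (Set X), IsRatRegularCozeroIdeal S → IsOpen (⋃₀ S)) ∧
    (∀ U : Set X, IsOpen U → ∃! S : Set (Set X), IsRatRegularCozeroIdeal S ∧ ⋃₀ S = U) ∧
    (∀ S T : Set (Set X), IsRatRegularCozeroIdeal S → IsRatRegularCozeroIdeal T →
        (S ⊆ T ↔ ⋃₀ S ⊆ ⋃₀ T)) := by
  refine ⟨fun S hS => isOpen_sUnion fun V hV => (hS.1 V hV).isOpen, ?_, ?_⟩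
  · intro U hU
    refine ⟨{V : Set X | IsCozero V ∧ V ⊆ U}, ⟨canonical_ideal U, ?_⟩, ?_⟩
    · apply Set.Subset.antisymm
      · exact Set.sUnion_subset fun V hV => hV.2
      · intro x hx
        obtain ⟨f, hf0, hf1, -⟩ := exists_continuous_zero_one_of_isClosed
          hU.isClosed_compl (isClosed_singleton (x := x))
          (by simp [Set.disjoint_singleton_right, hx])
        refine ⟨{y | 0 < f y}, ⟨⟨f, rfl⟩, ?_⟩, ?_⟩
        · intro y hy
          by_contra hyU
          have : f y = 0 := hf0 hyU
          simp [this] at hy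
        · have : f x = 1 := hf1 rfl
          simp [Set.mem_setOf_eq, this]
    · rintro S ⟨hS, rfl⟩
      ext V
      exact ⟨fun hV => ⟨hS.1 V hV, Set.subset_sUnion_of_mem hV⟩,
        fun hV => mem_of_cozero_subset hS hV.1 hV.2⟩
  · intro S T hS hT
    refine ⟨fun h => Set.sUnion_subset_sUnion h, fun h V hV => ?_⟩
    exact mem_of_cozero_subset hT (hS.1 V hV) ((Set.subset_sUnion_of_mem hV).trans h)
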